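/- arXiv:1612.08197 — 6 statements merged into one kernel-verified Lean document; each statement's English description precedes it below -/
import Mathlib

section
/- Let 𝒞 be a nowhere dense class of finite graphs. Then there exists a function d : ℕ → ℕ such that for every r ∈ ℕ, every graph G ∈ 𝒞, and every vertex subset A ⊆ V(G) with |A| ≥ 2, the distance profile complexity satisfies ν̂_r(G,A) ≤ |A|^{d(r)}. -/
open SimpleGraph

/-- A finite simple graph: a bundled finite vertex type together with a simple graph on it. -/
structure FinGraph : Type 1 where
  V : Type
  fintypeV : Fintype V
  graph : SimpleGraph V

attribute [instance] FinGraph.fintypeV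

/-- The set `S` induces a subgraph of `G` of radius at most `r`:
there is a center `c ∈ S` from which every vertex of `S` is at distance at most `r`
inside the subgraph induced by `S`. -/
def hasRadiusLE {V : Type} (G : SimpleGraph V) (S : Set V) (r : ℕ) : Prop :=
  ∃ c : S, ∀ x : S, (G.induce S).edist c x ≤ (r : ℕ∞)

/-- `H` is a depth-`r` minor of `G`: there is a minor model of `H` in `G` with
pairwise disjoint connected branch sets of radius at most `r`. -/
def IsDepthMinor {W V : Type} (r : ℕ) (H : SimpleGraph W) (G : SimpleGraph V) : Prop :=
  ∃ I : W → Set V,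
    (∀ u, hasRadiusLE G (I u) r) ∧
    (Pairwise fun u v => Disjoint (I u) (I v)) ∧
    (∀ u v, H.Adj u v → ∃ a ∈ I u, ∃ b ∈ I v, G.Adj a b)

/-- A class of finite graphs is nowhere dense if there is `f : ℕ → ℕ` such that
`K_{f r}` is not a depth-`r` minor of any member, for every `r`. -/
def NowhereDense (C : Set FinGraph) : Prop :=
  ∃ f : ℕ → ℕ, ∀ r : ℕ, ∀ G ∈ C, ¬ IsDepthMinor r (completeGraph (Fin (f r))) G.graph

/-- `H` is (isomorphic to) a subgraph of `G`. -/
def IsSubgraphOf (H G : FinGraph) : Prop :=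
  ∃ f : H.V ↪ G.V, ∀ u v, H.graph.Adj u v → G.graph.Adj (f u) (f v)

/-- A class of graphs is monotone if it is closed under taking subgraphs. -/
def MonotoneClass (C : Set FinGraph) : Prop :=
  ∀ G ∈ C, ∀ H : FinGraph, IsSubgraphOf H G → H ∈ C

/-- The closed ball of radius `r` around `v`: `N_r[v]`. -/
def ball {V : Type} (G : SimpleGraph V) (r : ℕ) (v : V) : Set V :=
  {u | G.edist u v ≤ (r : ℕ∞)}

/-- The `r`-neighborhood complexity `ν_r(G,A)`. -/
noncomputable def nu {V : Type} (G : SimpleGraph V) (r : ℕ) (A : Set V) : ℕ :=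
  {S : Set V | ∃ v : V, S = ball G r v ∩ A}.ncard

/-- The value of the `r`-distance profile of `u` at `x`:
`dist_G(u,x)` if it is at most `r`, and `∞` otherwise. -/
noncomputable def profVal {V : Type} (G : SimpleGraph V) (r : ℕ) (u x : V) : ℕ∞ :=
  if G.edist u x ≤ (r : ℕ∞) then G.edist u x else ⊤

/-- The distance profile complexity `ν̂_r(G,A)`: the number of distinct
`r`-distance profiles `π_r[u,A] : A → {0,…,r,∞}` over `u ∈ V(G)`. -/
noncomputable def nuHat {V : Type} (G : SimpleGraph V) (r : ℕ) (A : Set V) : ℕ :=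
  {f : ↥A → ℕ∞ | ∃ u : V, f = fun x : ↥A => profVal G r u ↑x}.ncard

/-- A family `F` of subsets shatters `X` if every subset of `X` is an intersection of
`X` with a member of `F`. -/
def Shatters {U : Type} (F : Set (Set U)) (X : Set U) : Prop :=
  ∀ Y ⊆ X, ∃ S ∈ F, X ∩ S = Y

/-- The family `F` has VC-dimension at most `d`. -/
def VCDimLE {U : Type} (F : Set (Set U)) (d : ℕ) : Prop :=
  ∀ X : Set U, Shatters F X → X.ncard ≤ d

/-- `WReach_r[G,L,v]`: the set of vertices weakly `r`-reachable from `v` with respect to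
the linear order `L`: vertices `u` joined to `v` by a path of length at most `r` on which
`u` is the `L`-least vertex. -/
def WReach {V : Type} (G : SimpleGraph V) (L : LinearOrder V) (r : ℕ) (v : V) : Set V :=
  {u | ∃ p : G.Walk u v, p.IsPath ∧ p.length ≤ r ∧ ∀ x ∈ p.support, L.le u x}

/-- `B` is `r`-independent in `G`: distinct vertices of `B` are at distance more than `r`. -/
def RIndep {V : Type} (G : SimpleGraph V) (r : ℕ) (B : Set V) : Prop :=
  ∀ u ∈ B, ∀ v ∈ B, u ≠ v → (r : ℕ∞) < G.edist u v

/-- The length of a shortest `A`-avoiding path from `u` to `v`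
(all vertices except possibly `v` lie outside `A`); `∞` if there is none. -/
noncomputable def avoidDist {V : Type} (G : SimpleGraph V) (A : Set V) (u v : V) : ℕ∞ :=
  sInf {n : ℕ∞ | ∃ p : G.Walk u v, p.IsPath ∧ (∀ x ∈ p.support, x ≠ v → x ∉ A) ∧ (p.length : ℕ∞) = n}

/-- The value of the `r`-projection profile `ρ_r[u,A]` at `v`. -/
noncomputable def projProfVal {V : Type} (G : SimpleGraph V) (r : ℕ) (A : Set V) (u v : V) : ℕ∞ :=
  if avoidDist G A u v ≤ (r : ℕ∞) then avoidDist G A u v else ⊤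

/-- The `r`-projection `M_r(u,A)` of `u` on `A`. -/
def Mproj {V : Type} (G : SimpleGraph V) (r : ℕ) (A : Set V) (u : V) : Set V :=
  {v ∈ A | avoidDist G A u v ≤ (r : ℕ∞)}

/-- The projection profile complexity `μ̂_r(G,A)`: the number of distinct
`r`-projection profiles `ρ_r[u,A]` over `u ∈ V(G) ∖ A`. -/
noncomputable def muHat {V : Type} (G : SimpleGraph V) (r : ℕ) (A : Set V) : ℕ :=
  {f : ↥A → ℕ∞ | ∃ u : V, u ∉ A ∧ f = fun v : ↥A => projProfVal G r A u ↑v}.ncard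

/-- `D` is a `(Z,r)`-dominator in `G`: every vertex of `Z` is at distance at most `r`
from some vertex of `D`. -/
def IsDominator {V : Type} (G : SimpleGraph V) (r : ℕ) (Z D : Set V) : Prop :=
  ∀ z ∈ Z, ∃ d ∈ D, G.edist z d ≤ (r : ℕ∞)

/-- `D` is a minimum-size `(Z,r)`-dominator in `G`. -/
def IsMinDominator {V : Type} (G : SimpleGraph V) (r : ℕ) (Z D : Set V) : Prop :=
  IsDominator G r Z D ∧ ∀ D' : Set V, IsDominator G r Z D' → D.ncard ≤ D'.ncard

/-- `Z` is an `r`-domination core of `G`: every minimum-size `(Z,r)`-dominator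
is an `r`-dominating set of `G`. -/
def IsDomCore {V : Type} (G : SimpleGraph V) (r : ℕ) (Z : Set V) : Prop :=
  ∀ D : Set V, IsMinDominator G r Z D → IsDominator G r Set.univ D

/-- `ds_r(G,Z)`: the minimum size of a `(Z,r)`-dominator in `G`. -/
noncomputable def dsr {V : Type} (G : SimpleGraph V) (r : ℕ) (Z : Set V) : ℕ :=
  sInf {n : ℕ | ∃ D : Set V, IsDominator G r Z D ∧ D.ncard = n}

/-!
The `r`-distance profile of `u` on `A` is determined by the traces `N_k[u] ∩ A` for `k ≤ r`,
so `ν̂_r(G,A) ≤ ∏_{k ≤ r} ν_k(G,A)`. If the `k`-ball traces shatter `t` vertices `x_1, …, x_t`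
of `A`, then every pair `x_i, x_j` is cut out by a ball `N_k[v]`, and the Voronoi cells of the
`x_i` truncated at radius `k` form a depth-`k` minor model of `K_t`: a shortest path from
`x_i` to `v` to `x_j` stays in the cells of `x_i` and `x_j`. Hence in a nowhere dense class the
`k`-ball traces have VC-dimension below `f k`, and the Sauer–Shelah lemma bounds their number
by `|A| ^ f k`.
-/

namespace SimpleGraph

variable {V : Type} {G : SimpleGraph V}

lemma Walk.edist_add_edist_le_length {u v y : V} (p : G.Walk u v) (hy : y ∈ p.support) :
    G.edist u y + G.edist y v ≤ p.length := by
  classical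
  rw [← p.take_spec hy, Walk.length_append, Nat.cast_add]
  exact add_le_add (edist_le _) (edist_le _)

lemma exists_walk_length_le_of_edist_le {u v : V} {n : ℕ} (h : G.edist u v ≤ n) :
    ∃ p : G.Walk u v, p.length ≤ n := by
  obtain ⟨p, hp⟩ := exists_walk_of_edist_ne_top (ne_top_of_le_ne_top (ENat.natCast_ne_top n) h)
  exact ⟨p, by rw [← hp] at h; exact_mod_cast h⟩

section Voronoi

variable {ι : Type} [LinearOrder ι] {x : ι → V} {s : ℕ} {i j : ι} {y z : V}

variable (G) in
/-- Ties between equidistant centres go to the smaller index. -/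
def voronoiCell (x : ι → V) (s : ℕ) (i : ι) : Set V :=
  {z | G.edist z (x i) ≤ s ∧ (∀ m < i, G.edist z (x i) < G.edist z (x m)) ∧
    ∀ m, i < m → G.edist z (x i) ≤ G.edist z (x m)}

lemma mem_voronoiCell_self (hx : Function.Injective x) (i : ι) : x i ∈ voronoiCell G x s i := by
  refine ⟨by simp, fun m hm => ?_, fun m _ => by simp⟩
  simpa using edist_pos_of_ne (hx.ne hm.ne')

lemma pairwise_disjoint_voronoiCell :
    Pairwise fun i j => Disjoint (voronoiCell G x s i) (voronoiCell G x s j) := by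
  intro i j hij
  wlog hlt : i < j generalizing i j
  · exact (this hij.symm (hij.symm.lt_of_le (not_lt.1 hlt))).symm
  exact Set.disjoint_left.2 fun z hi hj => (hi.2.2 j hlt).not_gt (hj.2.1 i hlt)

/-- The cell is that of the `w` minimising `(G.edist y (x w), w)` lexicographically. -/
lemma exists_mem_voronoiCell [Finite ι] {c : ι} (hc : G.edist y (x c) ≤ s) :
    ∃ w, y ∈ voronoiCell G x s w ∧ G.edist y (x w) ≤ G.edist y (x c) := by
  have : Nonempty ι := ⟨c⟩
  obtain ⟨w, hw⟩ := Finite.exists_min fun m => toLex (G.edist y (x m), m)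
  have hmin : ∀ m, G.edist y (x w) < G.edist y (x m) ∨
      G.edist y (x w) = G.edist y (x m) ∧ w ≤ m := fun m => Prod.Lex.toLex_le_toLex.1 (hw m)
  have hwc : G.edist y (x w) ≤ G.edist y (x c) := by
    rcases hmin c with h | h
    exacts [h.le, h.1.le]
  refine ⟨w, ⟨hwc.trans hc, fun m hm => ?_, fun m _ => ?_⟩, hwc⟩
  · exact (hmin m).resolve_right fun h => h.2.not_gt hm
  · rcases hmin m with h | h
    exacts [h.le, h.1.le]

lemma mem_voronoiCell_of_mem_support (hz : z ∈ voronoiCell G x s i) (p : G.Walk z (x i))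
    (hp : p.length = G.edist z (x i)) (hy : y ∈ p.support) : y ∈ voronoiCell G x s i := by
  have hsplit : G.edist z y + G.edist y (x i) ≤ G.edist z (x i) :=
    hp ▸ p.edist_add_edist_le_length hy
  have hzy : G.edist z y ≠ ⊤ :=
    ne_top_of_le_ne_top (ne_top_of_le_ne_top (ENat.natCast_ne_top s) hz.1)
      (le_self_add.trans hsplit)
  have htri : ∀ m, G.edist z (x m) ≤ G.edist z y + G.edist y (x m) := fun m => G.edist_triangle
  refine ⟨(le_add_self.trans hsplit).trans hz.1, fun m hm => ?_, fun m hm => ?_⟩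
  · rw [← ENat.add_lt_add_iff_left hzy]
    exact hsplit.trans_lt ((hz.2.1 m hm).trans_le (htri m))
  · rw [← ENat.add_le_add_iff_left hzy]
    exact hsplit.trans ((hz.2.2 m hm).trans (htri m))

lemma hasRadiusLE_voronoiCell (hx : Function.Injective x) (i : ι) :
    hasRadiusLE G (voronoiCell G x s i) s := by
  refine ⟨⟨x i, mem_voronoiCell_self hx i⟩, fun ⟨z, hz⟩ => ?_⟩
  obtain ⟨p, hp⟩ :=
    exists_walk_of_edist_ne_top (ne_top_of_le_ne_top (ENat.natCast_ne_top s) hz.1)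
  let q := p.induce _ fun y hy => mem_voronoiCell_of_mem_support hz p hp hy
  calc (G.induce (voronoiCell G x s i)).edist ⟨x i, _⟩ ⟨z, hz⟩ ≤ q.reverse.length :=
        edist_le q.reverse
    _ = (p.length : ℕ∞) := by
        congr 1
        rw [Walk.length_reverse, ← Walk.length_map (Embedding.induce _).toHom, Walk.map_induce]
        rfl
    _ = G.edist z (x i) := hp
    _ ≤ s := hz.1

/-- The centre of the cell of `y` is no farther from `y` than `x c`, hence within distance `s`
of `v`. -/
lemma mem_voronoiCell_union_of_mem_support [Finite ι] {v : V} {c : ι}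
    (hv : ∀ m, G.edist v (x m) ≤ s → m = i ∨ m = j) (hc : c = i ∨ c = j)
    (q : G.Walk v (x c)) (hq : q.length ≤ s) (hy : y ∈ q.support) :
    y ∈ voronoiCell G x s i ∪ voronoiCell G x s j := by
  have hsplit : G.edist v y + G.edist y (x c) ≤ s :=
    (q.edist_add_edist_le_length hy).trans (by exact_mod_cast hq)
  obtain ⟨w, hyw, hwc⟩ := exists_mem_voronoiCell (le_add_self.trans hsplit)
  have hvw : G.edist v (x w) ≤ s :=
    G.edist_triangle.trans ((add_le_add_right hwc _).trans hsplit)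
  rcases hv w hvw with rfl | rfl
  exacts [Or.inl hyw, Or.inr hyw]

theorem isDepthMinor_completeGraph_of_forall_pair [Finite ι] (hx : Function.Injective x)
    (h : ∀ i j, i ≠ j → ∃ v, ∀ m, G.edist v (x m) ≤ s ↔ m = i ∨ m = j) :
    IsDepthMinor s (completeGraph ι) G := by
  refine ⟨voronoiCell G x s, hasRadiusLE_voronoiCell hx, pairwise_disjoint_voronoiCell,
    fun i j hij => ?_⟩
  obtain ⟨v, hv⟩ := h i j hij
  obtain ⟨p, hp⟩ := exists_walk_length_le_of_edist_le ((hv i).2 (Or.inl rfl))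
  obtain ⟨q, hq⟩ := exists_walk_length_le_of_edist_le ((hv j).2 (Or.inr rfl))
  have hsupp : ∀ y ∈ (p.reverse.append q).support,
      y ∈ voronoiCell G x s i ∪ voronoiCell G x s j := by
    intro y hy
    rcases Walk.mem_support_append_iff _ _ |>.1 hy with hy | hy
    · exact mem_voronoiCell_union_of_mem_support (fun m => (hv m).1) (Or.inl rfl) p hp
        (by simpa using hy)
    · exact mem_voronoiCell_union_of_mem_support (fun m => (hv m).1) (Or.inr rfl) q hq hy
  obtain ⟨d, hd, hd₁, hd₂⟩ := (p.reverse.append q).exists_boundary_dart _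
    (mem_voronoiCell_self hx i)
    (Set.disjoint_right.1 (pairwise_disjoint_voronoiCell hij) (mem_voronoiCell_self hx j))
  exact ⟨d.fst, hd₁, d.snd,
    (hsupp _ (Walk.dart_snd_mem_support_of_mem_darts _ hd)).resolve_left hd₂, d.adj⟩

end Voronoi

section BallTraces

variable {A X : Finset V} {r s t : ℕ}

lemma _root_.ENat.eq_of_forall_le_natCast_iff {a b : ℕ∞} (h : ∀ k ≤ r, a ≤ k ↔ b ≤ k)
    (ha : a ≤ r) : a = b := by
  lift a to ℕ using ne_top_of_le_ne_top (ENat.natCast_ne_top r) ha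
  have hb : b ≤ a := (h a (by exact_mod_cast ha)).1 le_rfl
  lift b to ℕ using ne_top_of_le_ne_top (ENat.natCast_ne_top a) hb
  exact le_antisymm ((h b (by exact_mod_cast hb.trans ha)).2 le_rfl) hb

lemma profVal_eq_of_forall_le_iff {u u' y : V}
    (h : ∀ k ≤ r, G.edist u y ≤ k ↔ G.edist u' y ≤ k) : profVal G r u y = profVal G r u' y := by
  unfold profVal
  by_cases hu : G.edist u y ≤ r
  · have huu' := ENat.eq_of_forall_le_natCast_iff h hu
    rw [if_pos hu, if_pos (huu' ▸ hu), huu']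
  · rw [if_neg hu, if_neg (mt (h r le_rfl).2 hu)]

variable (G) in
open Classical in
noncomputable def ballTrace (A : Finset V) (s : ℕ) (u : V) : Finset V :=
  A.filter fun y => G.edist u y ≤ s

lemma mem_ballTrace {u y : V} : y ∈ ballTrace G A s u ↔ y ∈ A ∧ G.edist u y ≤ s := by
  classical
  simp [ballTrace]

variable [Fintype V]

variable (G) in
open Classical in
/-- The traces `N_s[u] ∩ A`; their number is `ν_s(G, A)`. -/
noncomputable def ballTraces (A : Finset V) (s : ℕ) : Finset (Finset V) :=
  Finset.univ.image (ballTrace G A s)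

lemma mem_ballTraces {T : Finset V} : T ∈ ballTraces G A s ↔ ∃ u, ballTrace G A s u = T := by
  classical
  simp [ballTraces]

lemma card_lt_of_shatters_ballTraces [DecidableEq V]
    (hG : ¬ IsDepthMinor s (completeGraph (Fin t)) G) (hX : (ballTraces G A s).Shatters X) :
    X.card < t := by
  by_contra! htX
  obtain ⟨Y, hYX, hY⟩ := Finset.exists_subset_card_eq htX
  have hYA : Y ⊆ A := by
    obtain ⟨_, hu, hXu⟩ := hX.exists_superset
    obtain ⟨w, rfl⟩ := mem_ballTraces.1 hu
    exact hYX.trans fun y hy => (mem_ballTrace.1 (hXu hy)).1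
  let e := Y.equivFinOfCardEq hY
  have hx : Function.Injective fun k => (e.symm k : V) :=
    Subtype.val_injective.comp e.symm.injective
  refine hG (isDepthMinor_completeGraph_of_forall_pair hx fun i j _ => ?_)
  obtain ⟨_, hu, hYu⟩ := hX.mono_right hYX
    (show {(e.symm i : V), (e.symm j : V)} ⊆ Y by simp [Finset.insert_subset_iff])
  obtain ⟨w, rfl⟩ := mem_ballTraces.1 hu
  refine ⟨w, fun m => ?_⟩
  have hm := congrArg (((e.symm m : V)) ∈ ·) hYu
  simpa [mem_ballTrace, hYA (e.symm m).2, hx.eq_iff] using hm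

theorem card_ballTraces_le_pow (hA : 2 ≤ A.card)
    (hG : ¬ IsDepthMinor s (completeGraph (Fin t)) G) : (ballTraces G A s).card ≤ A.card ^ t := by
  classical
  have hshatterer : (ballTraces G A s).shatterer ⊆
      (Finset.range t).biUnion fun k => A.powersetCard k := by
    intro X hX
    have hX := Finset.mem_shatterer.1 hX
    obtain ⟨_, hu, hXu⟩ := hX.exists_superset
    obtain ⟨w, rfl⟩ := mem_ballTraces.1 hu
    exact Finset.mem_biUnion.2 ⟨X.card, Finset.mem_range.2 (card_lt_of_shatters_ballTraces hG hX),
      Finset.mem_powersetCard.2 ⟨fun y hy => (mem_ballTrace.1 (hXu hy)).1, rfl⟩⟩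
  calc (ballTraces G A s).card ≤ (ballTraces G A s).shatterer.card :=
        Finset.card_le_card_shatterer _
    _ ≤ ∑ k ∈ Finset.range t, (A.powersetCard k).card :=
        (Finset.card_le_card hshatterer).trans Finset.card_biUnion_le
    _ ≤ ∑ k ∈ Finset.range t, A.card ^ k := by
        gcongr with k
        rw [Finset.card_powersetCard]
        exact Nat.choose_le_pow _ _
    _ ≤ A.card ^ t := (Nat.geomSum_lt hA fun k hk => Finset.mem_range.1 hk).le

theorem nuHat_le_prod_card_ballTraces (A : Finset V) (r : ℕ) :
    nuHat G r A ≤ ∏ k : Fin (r + 1), (ballTraces G A k).card := by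
  let prof : V → ↥(A : Set V) → ℕ∞ := fun u y => profVal G r u y
  let traces : V → Fin (r + 1) → Finset V := fun u k => ballTrace G A k u
  have hfactor : Function.FactorsThrough prof traces := by
    intro u u' h
    funext y
    refine profVal_eq_of_forall_le_iff fun k hk => ?_
    have hk := congrArg ((y : V) ∈ ·) (congrFun h ⟨k, Nat.lt_succ_of_le hk⟩)
    simpa [traces, mem_ballTrace, y.2] using hk
  have hrange : Set.range traces ⊆ Fintype.piFinset fun k : Fin (r + 1) => ballTraces G A k := by
    rintro _ ⟨u, rfl⟩
    simp [traces, ballTraces]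
  calc nuHat G r A = (Set.range prof).ncard := by
        simp only [nuHat, Set.range, eq_comm, prof]
    _ = (Function.extend traces prof (fun _ _ => ⊤) '' Set.range traces).ncard := by
        rw [← Set.range_comp, hfactor.extend_comp]
    _ ≤ (Set.range traces).ncard := Set.ncard_image_le (Set.finite_range _)
    _ ≤ (Fintype.piFinset fun k : Fin (r + 1) => ballTraces G A k : Set _).ncard :=
        Set.ncard_le_ncard hrange (Finset.finite_toSet _)
    _ = ∏ k : Fin (r + 1), (ballTraces G A k).card := by
        rw [Set.ncard_coe_finset, Fintype.card_piFinset]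

end BallTraces

end SimpleGraph

open SimpleGraph in
/-- Nowhere dense classes have polynomial distance profile complexity. -/
theorem distance_profile_complexity_poly_of_nowhereDense
    (C : Set FinGraph) (hC : NowhereDense C) :
    ∃ d : ℕ → ℕ, ∀ (r : ℕ), ∀ G ∈ C, ∀ A : Set G.V, 2 ≤ A.ncard →
      nuHat G.graph r A ≤ A.ncard ^ d r := by
  obtain ⟨f, hf⟩ := hC
  refine ⟨fun r => ∑ k : Fin (r + 1), f k, fun r G hG A hA => ?_⟩
  lift A to Finset G.V using A.toFinite
  rw [Set.ncard_coe_finset] at hA ⊢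
  calc nuHat G.graph r A ≤ ∏ k : Fin (r + 1), (ballTraces G.graph A k).card :=
        nuHat_le_prod_card_ballTraces A r
    _ ≤ ∏ k : Fin (r + 1), A.card ^ f k :=
        Finset.prod_le_prod' fun k _ => card_ballTraces_le_pow hA (hf k G hG)
    _ = A.card ^ ∑ k : Fin (r + 1), f k := Finset.prod_pow_eq_pow_sum _ _ _
end

section
/- Let G be a finite graph, let r, s, m ∈ ℕ, let L be a linear order of V(G), let S ⊆ V(G) with |S| ≤ s, and let B ⊆ V(G) ∖ S with |B| = m be such that B is 2r-independent in the graph G − S. Then the number of distinct sets of the form WReach_r[G,L,v] ∩ B, over v ∈ V(G), is at most (m+1)^{r·s+1}. -/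
open SimpleGraph

section AuxWT
variable {V : Type} (G : SimpleGraph V) (L : LinearOrder V)

/-- walk of length ≤ r from u to v with u L-minimal on it -/
def WTMinWalk (r : ℕ) (u v : V) : Prop :=
  ∃ W : G.Walk u v, W.length ≤ r ∧ ∀ x ∈ W.support, L.le u x

lemma WT_mem_wreach_iff {r : ℕ} {u v : V} :
    u ∈ WReach G L r v ↔ WTMinWalk G L r u v := by
  constructor
  · rintro ⟨p, _, hl, hm⟩; exact ⟨p, hl, hm⟩
  · rintro ⟨W, hl, hm⟩
    exact ⟨W.bypass, W.bypass_isPath, le_trans W.length_bypass_le hl,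
      fun x hx => hm x (W.support_bypass_subset hx)⟩

def WTcond1 (r : ℕ) (u w : V) (j : ℕ) : Prop :=
  ∃ W : G.Walk u w, W.length + j ≤ r ∧ ∀ x ∈ W.support, L.le u x

def WTcond2 (j : ℕ) (u w v : V) : Prop :=
  ∃ W : G.Walk w v, W.length ≤ j ∧ ∀ x ∈ W.support, L.le u x

def WTcaseA (S : Set V) (r : ℕ) (u v : V) : Prop :=
  ∃ W : G.Walk u v, W.length ≤ r ∧ (∀ x ∈ W.support, L.le u x) ∧
    ∀ x ∈ W.support, x ∉ S

lemma WT_split {S : Set V} {r : ℕ} {u v : V} (hu : u ∉ S)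
    (h : WTMinWalk G L r u v) :
    WTcaseA G L S r u v ∨
      ∃ w ∈ S, ∃ j < r, WTcond1 G L r u w j ∧ WTcond2 G L j u w v := by
  obtain ⟨W, hl, hm⟩ := h
  by_cases hS : ∀ x ∈ W.support, x ∉ S
  · exact Or.inl ⟨W, hl, hm, hS⟩
  · right
    push_neg at hS
    obtain ⟨w, hwsup, hwS⟩ := hS
    set W1 := W.takeUntil w hwsup with hW1
    set W2 := W.dropUntil w hwsup with hW2
    have hsum : W1.length + W2.length = W.length := by
      rw [hW1, hW2, ← SimpleGraph.Walk.length_append, W.take_spec hwsup]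
    have hne : u ≠ w := fun h => hu (h ▸ hwS)
    have hi1 : 1 ≤ W1.length := by
      rcases Nat.eq_zero_or_pos W1.length with h0 | h
      · exact absurd (SimpleGraph.Walk.eq_of_length_eq_zero h0) hne
      · exact h
    refine ⟨w, hwS, r - W1.length, ?_, ?_, ?_⟩
    · omega
    · exact ⟨W1, by omega, fun x hx => hm x (W.support_takeUntil_subset hwsup hx)⟩
    · exact ⟨W2, by omega, fun x hx => hm x (W.support_dropUntil_subset hwsup hx)⟩

lemma WT_reconstruct {r : ℕ} {u w v : V} {j : ℕ}
    (h1 : WTcond1 G L r u w j) (h2 : WTcond2 G L j u w v) :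
    WTMinWalk G L r u v := by
  obtain ⟨W1, hl1, hm1⟩ := h1
  obtain ⟨W2, hl2, hm2⟩ := h2
  refine ⟨W1.append W2, ?_, ?_⟩
  · rw [SimpleGraph.Walk.length_append]; omega
  · intro x hx
    rw [SimpleGraph.Walk.mem_support_append_iff] at hx
    rcases hx with hx | hx
    · exact hm1 x hx
    · exact hm2 x hx

lemma WT_caseA_minwalk {S : Set V} {r : ℕ} {u v : V} (h : WTcaseA G L S r u v) :
    WTMinWalk G L r u v := by
  obtain ⟨W, hl, hm, _⟩ := h; exact ⟨W, hl, hm⟩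

lemma WT_walk_induce {A : Set V} :
    ∀ {u v : V} (W : G.Walk u v), (∀ x ∈ W.support, x ∈ A) →
      ∀ (hu : u ∈ A) (hv : v ∈ A),
      ∃ W' : (G.induce A).Walk ⟨u, hu⟩ ⟨v, hv⟩, W'.length = W.length := by
  intro u v W
  induction W with
  | nil => intro _ hu hv; exact ⟨SimpleGraph.Walk.nil, rfl⟩
  | @cons a b c hadj p ih =>
    intro h hu hv
    have hb : b ∈ A := h b (by simp)
    obtain ⟨W', hW'⟩ := ih (fun x hx => h x (by simp [hx])) hb hv
    have hadj' : (G.induce A).Adj ⟨a, hu⟩ ⟨b, hb⟩ := hadj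
    exact ⟨SimpleGraph.Walk.cons hadj' W', by simp [hW']⟩

lemma WT_caseA_unique {S B : Set V} {r : ℕ} (hBS : B ⊆ Sᶜ)
    (hind : ∀ u v : ↥(Sᶜ), (u : V) ∈ B → (v : V) ∈ B → u ≠ v →
      ((2 * r : ℕ) : ℕ∞) < (G.induce Sᶜ).edist u v)
    {u u' v : V} (hu : u ∈ B) (hu' : u' ∈ B)
    (hA : WTcaseA G L S r u v) (hA' : WTcaseA G L S r u' v) : u = u' := by
  by_contra hne
  obtain ⟨W, hl, _, hSa⟩ := hA
  obtain ⟨W', hl', _, hSa'⟩ := hA'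
  set Wc := W.append W'.reverse with hWc
  have hsupp : ∀ x ∈ Wc.support, x ∈ Sᶜ := by
    intro x hx
    rw [hWc, SimpleGraph.Walk.mem_support_append_iff] at hx
    rcases hx with hx | hx
    · exact hSa x hx
    · rw [SimpleGraph.Walk.support_reverse, List.mem_reverse] at hx
      exact hSa' x hx
  obtain ⟨Wi, hWi⟩ := WT_walk_induce G Wc hsupp (hBS hu) (hBS hu')
  have hlen : Wc.length ≤ 2 * r := by
    rw [hWc, SimpleGraph.Walk.length_append, SimpleGraph.Walk.length_reverse]; omega
  have hdist : (G.induce Sᶜ).edist ⟨u, hBS hu⟩ ⟨u', hBS hu'⟩ ≤ ((2 * r : ℕ) : ℕ∞) := by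
    refine le_trans (SimpleGraph.edist_le Wi) ?_
    rw [hWi]
    exact_mod_cast Nat.cast_le.mpr hlen
  have hne' : (⟨u, hBS hu⟩ : ↥(Sᶜ)) ≠ ⟨u', hBS hu'⟩ := by
    intro h; exact hne (congrArg Subtype.val h)
  exact absurd hdist (not_le.mpr (hind _ _ hu hu' hne'))

end AuxWT

section AuxWT2
attribute [local instance] Classical.propDecidable
set_option linter.unusedSectionVars false
variable {V : Type} [Fintype V] (G : SimpleGraph V) (L : LinearOrder V)

noncomputable def WTc0 (S B : Set V) (r : ℕ) (v : V) : Option ↥B :=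
  if h : ∃ u, ∃ hu : u ∈ B, WTcaseA G L S r u v then
    some ⟨h.choose, h.choose_spec.choose⟩ else none

lemma WTc0_eq_some {S B : Set V} {r : ℕ} {v : V} {b : ↥B}
    (h : WTc0 G L S B r v = some b) : WTcaseA G L S r (b : V) v := by
  rw [WTc0] at h
  split_ifs at h with hex
  · have := hex.choose_spec.choose_spec
    have hb : hex.choose = (b : V) := congrArg Subtype.val (Option.some_injective _ h)
    rwa [hb] at this

lemma WTc0_some_of {S B : Set V} {r : ℕ} {v : V} {u : V} (hu : u ∈ B)
    (huniq : ∀ u u' : V, u ∈ B → u' ∈ B → WTcaseA G L S r u v → WTcaseA G L S r u' v → u = u')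
    (hA : WTcaseA G L S r u v) : WTc0 G L S B r v = some ⟨u, hu⟩ := by
  rw [WTc0]
  have hex : ∃ u, ∃ hu : u ∈ B, WTcaseA G L S r u v := ⟨u, hu, hA⟩
  rw [dif_pos hex]
  congr 1
  exact Subtype.ext (huniq _ _ hex.choose_spec.choose hu hex.choose_spec.choose_spec hA)

noncomputable def WTCfin (B : Set V) (r : ℕ) (w : V) (j : ℕ) (v : V) : Finset V :=
  (Set.toFinite {u | u ∈ B ∧ WTcond1 G L r u w j ∧ WTcond2 G L j u w v}).toFinset

lemma WT_mem_Cfin {B : Set V} {r : ℕ} {w : V} {j : ℕ} {v u : V} :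
    u ∈ WTCfin G L B r w j v ↔ u ∈ B ∧ WTcond1 G L r u w j ∧ WTcond2 G L j u w v :=
  Set.Finite.mem_toFinset _

noncomputable def WTbeta (B : Set V) (r : ℕ) (w : V) (j : ℕ) (v : V) : Option ↥B :=
  if h : (WTCfin G L B r w j v).Nonempty then
    some ⟨@Finset.max' V L _ h,
      ((WT_mem_Cfin G L).mp (@Finset.max'_mem V L _ h)).1⟩
  else none

lemma WTbeta_eq_some {B : Set V} {r : ℕ} {w : V} {j : ℕ} {v : V} {b : ↥B}
    (h : WTbeta G L B r w j v = some b) :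
    WTcond1 G L r (b : V) w j ∧ WTcond2 G L j (b : V) w v := by
  rw [WTbeta] at h
  split_ifs at h with hne
  · have hb : @Finset.max' V L _ hne = (b : V) :=
      congrArg Subtype.val (Option.some_injective _ h)
    have := (WT_mem_Cfin G L).mp (@Finset.max'_mem V L _ hne)
    rw [hb] at this
    exact this.2

lemma WT_le_beta {B : Set V} {r : ℕ} {w : V} {j : ℕ} {v u : V}
    (hu : u ∈ B) (h1 : WTcond1 G L r u w j) (h2 : WTcond2 G L j u w v) :
    ∃ b : ↥B, WTbeta G L B r w j v = some b ∧ L.le u (b : V) := by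
  have hmem : u ∈ WTCfin G L B r w j v := (WT_mem_Cfin G L).mpr ⟨hu, h1, h2⟩
  have hne : (WTCfin G L B r w j v).Nonempty := ⟨u, hmem⟩
  refine ⟨⟨@Finset.max' V L _ hne, ((WT_mem_Cfin G L).mp (@Finset.max'_mem V L _ hne)).1⟩,
    ?_, @Finset.le_max' V L _ u hmem⟩
  rw [WTbeta, dif_pos hne]

lemma WTcond2_mono {j : ℕ} {u u' w v : V} (hle : L.le u' u)
    (h : WTcond2 G L j u w v) : WTcond2 G L j u' w v := by
  obtain ⟨W, hl, hm⟩ := h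
  exact ⟨W, hl, fun x hx => L.le_trans _ _ _ hle (hm x hx)⟩

end AuxWT2

/-- With `|S| ≤ s` and `B ⊆ V ∖ S` of size `m` that is `2r`-independent
in `G − S`, the number of traces of weak `r`-reachability sets on `B` is at most
`(m+1)^(r·s+1)`. -/
theorem wreach_traces_on_B_bound
    {V : Type} [Fintype V] (G : SimpleGraph V) (r s m : ℕ)
    (L : LinearOrder V) (S : Set V) (hS : S.ncard ≤ s)
    (B : Set V) (hBS : B ⊆ Sᶜ) (hBm : B.ncard = m)
    (hind : ∀ u v : ↥(Sᶜ), (u : V) ∈ B → (v : V) ∈ B → u ≠ v →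
      ((2 * r : ℕ) : ℕ∞) < (G.induce Sᶜ).edist u v) :
    {T : Set V | ∃ v : V, T = WReach G L r v ∩ B}.ncard ≤ (m + 1) ^ (r * s + 1) := by
  classical
  have huniq : ∀ v u u' : V, u ∈ B → u' ∈ B → WTcaseA G L S r u v →
      WTcaseA G L S r u' v → u = u' :=
    fun v u u' hu hu' hA hA' => WT_caseA_unique G L hBS hind hu hu' hA hA'
  have key : ∀ v v' : V, WTc0 G L S B r v = WTc0 G L S B r v' →
      (∀ w ∈ S, ∀ j < r, WTbeta G L B r w j v = WTbeta G L B r w j v') →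
      ∀ u ∈ B, u ∈ WReach G L r v → u ∈ WReach G L r v' := by
    intro v v' hc hb u hu h
    rw [WT_mem_wreach_iff] at h ⊢
    have huS : u ∉ S := by simpa using hBS hu
    rcases WT_split G L huS h with hA | ⟨w, hw, j, hj, h1, h2⟩
    · have hc0 : WTc0 G L S B r v = some ⟨u, hu⟩ := WTc0_some_of G L hu (huniq v) hA
      rw [hc] at hc0
      exact WT_caseA_minwalk G L (WTc0_eq_some G L hc0)
    · obtain ⟨b, hbeq, hub⟩ := WT_le_beta G L hu h1 h2
      rw [hb w hw j hj] at hbeq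
      obtain ⟨hb1, hb2⟩ := WTbeta_eq_some G L hbeq
      exact WT_reconstruct G L h1 (WTcond2_mono G L hub hb2)
  haveI : Fintype ↥B := (Set.toFinite B).fintype
  haveI : Fintype ↥S := (Set.toFinite S).fintype
  set Φ : V → Option ↥B × (↥S × Fin r → Option ↥B) :=
    fun v => (WTc0 G L S B r v, fun p => WTbeta G L B r (p.1 : V) (p.2 : ℕ) v) with hΦ
  set tr : V → Set V := fun v => WReach G L r v ∩ B with htr
  have hdet : ∀ v v', Φ v = Φ v' → tr v = tr v' := by
    intro v v' h
    have hc : WTc0 G L S B r v = WTc0 G L S B r v' := congrArg Prod.fst h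
    have hbfun := congrArg Prod.snd h
    have hbeta : ∀ w ∈ S, ∀ j < r, WTbeta G L B r w j v = WTbeta G L B r w j v' := by
      intro w hw j hj
      exact congrFun hbfun (⟨⟨w, hw⟩, ⟨j, hj⟩⟩)
    ext u
    simp only [htr, Set.mem_inter_iff]
    constructor
    · rintro ⟨h1, h2⟩; exact ⟨key v v' hc hbeta u h2 h1, h2⟩
    · rintro ⟨h1, h2⟩
      exact ⟨key v' v hc.symm (fun w hw j hj => (hbeta w hw j hj).symm) u h2 h1, h2⟩
  have hset : {T : Set V | ∃ v, T = WReach G L r v ∩ B} = Set.range tr := by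
    ext T; simp [htr, eq_comm, Set.range]
  rw [hset]
  set g : (Option ↥B × (↥S × Fin r → Option ↥B)) → Set V :=
    fun φ => if h : ∃ v, Φ v = φ then tr h.choose else ∅ with hg
  have hfact : ∀ v, tr v = g (Φ v) := by
    intro v
    have hex : ∃ v', Φ v' = Φ v := ⟨v, rfl⟩
    rw [hg]; simp only; rw [dif_pos hex]
    exact (hdet _ _ hex.choose_spec).symm
  have hrange : Set.range tr ⊆ g '' Set.univ := by
    rintro T ⟨v, rfl⟩; exact ⟨Φ v, trivial, (hfact v).symm⟩
  have h1 : (Set.range tr).ncard ≤ (g '' Set.univ).ncard :=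
    Set.ncard_le_ncard hrange ((Set.toFinite _).image g)
  have h2 : (g '' Set.univ).ncard
      ≤ (Set.univ : Set (Option ↥B × (↥S × Fin r → Option ↥B))).ncard :=
    Set.ncard_image_le (Set.toFinite _)
  have h3 : (Set.univ : Set (Option ↥B × (↥S × Fin r → Option ↥B))).ncard
      = Fintype.card (Option ↥B × (↥S × Fin r → Option ↥B)) := by
    rw [Set.ncard_univ, Nat.card_eq_fintype_card]
  have hcardB : Fintype.card ↥B = m := by
    rw [← hBm, ← Nat.card_coe_set_eq, Nat.card_eq_fintype_card]
  have hcardS : Fintype.card ↥S ≤ s := by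
    rwa [← Nat.card_coe_set_eq, Nat.card_eq_fintype_card] at hS
  have h4 : Fintype.card (Option ↥B × (↥S × Fin r → Option ↥B))
      = (m + 1) ^ (Fintype.card ↥S * r + 1) := by
    rw [Fintype.card_prod, Fintype.card_option, Fintype.card_fun, Fintype.card_option,
      Fintype.card_prod, Fintype.card_fin, hcardB, pow_succ, Nat.mul_comm]
  have h5 : (m + 1) ^ (Fintype.card ↥S * r + 1) ≤ (m + 1) ^ (r * s + 1) := by
    refine Nat.pow_le_pow_right (Nat.succ_le_succ (Nat.zero_le m)) ?_
    have := Nat.mul_le_mul_right r hcardS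
    have hrs : s * r = r * s := Nat.mul_comm s r
    omega
  omega
end

section
/- Let G be a finite graph, r ∈ ℕ, L a linear order of V(G), and A ⊆ V(G). For v ∈ V(G), define Y[v] = WReach_r[G,L,v] ∩ WReach_r[G,L,A]. Then for all vertices v, w ∈ V(G): if Y[v] = Y[w] and the r-distance profiles of v on Y[v] and of w on Y[w] coincide (i.e., π_r[v,Y[v]] = π_r[w,Y[w]] as functions on Y[v] = Y[w]), then the r-distance profiles of v and w on A coincide, i.e., π_r[v,A] = π_r[w,A]. -/
open SimpleGraph

private lemma key_step {V : Type} (G : SimpleGraph V) (r : ℕ) (L : LinearOrder V)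
    (A : Set V) (v w : V)
    (hprof : ∀ x ∈ WReach G L r v ∩ (⋃ a ∈ A, WReach G L r a),
      profVal G r v x = profVal G r w x)
    (x : V) (hx : x ∈ A) (hvx : G.edist v x ≤ (r : ℕ∞)) :
    G.edist w x ≤ G.edist v x := by
  have hne : G.edist v x ≠ ⊤ := fun h => by simp [h] at hvx
  obtain ⟨p, hp⟩ := G.exists_walk_of_edist_ne_top hne
  set q := p.bypass with hqdef
  have hqpath : q.IsPath := p.bypass_isPath
  have hqlen : (q.length : ℕ∞) = G.edist v x := by
    refine le_antisymm ?_ ?_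
    · rw [← hp]; exact_mod_cast Nat.cast_le.mpr p.length_bypass_le
    · exact G.edist_le q
  have hqr : (q.length : ℕ∞) ≤ (r : ℕ∞) := hqlen ▸ hvx
  have hqrn : q.length ≤ r := by exact_mod_cast hqr
  -- take L-min vertex u of q.support
  have hsn : q.support.toFinset.Nonempty := by
    simp [List.toFinset_nonempty_iff, q.support_ne_nil]
  obtain ⟨u, hu, hmin⟩ := q.support.toFinset.exists_min_image id hsn
  rw [List.mem_toFinset] at hu
  have hmin' : ∀ y ∈ q.support, L.le u y := fun y hy =>
    hmin y (List.mem_toFinset.mpr hy)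
  set t1 := q.takeUntil u hu with ht1
  set t2 := q.dropUntil u hu with ht2
  have hsum : t1.length + t2.length = q.length := by
    have := congr_arg SimpleGraph.Walk.length (q.take_spec hu)
    rwa [SimpleGraph.Walk.length_append] at this
  have huv : u ∈ WReach G L r v := by
    refine ⟨t1.reverse, (hqpath.takeUntil hu).reverse, ?_, ?_⟩
    · rw [SimpleGraph.Walk.length_reverse]
      exact le_trans (Nat.le.intro hsum) hqrn
    · intro y hy
      rw [SimpleGraph.Walk.support_reverse, List.mem_reverse] at hy
      exact hmin' y (q.support_takeUntil_subset hu hy)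
  have hux : u ∈ WReach G L r x := by
    refine ⟨t2, hqpath.dropUntil hu, ?_, ?_⟩
    · omega
    · exact fun y hy => hmin' y (q.support_dropUntil_subset hu hy)
  have huY : u ∈ WReach G L r v ∩ (⋃ a ∈ A, WReach G L r a) :=
    ⟨huv, Set.mem_biUnion hx hux⟩
  have hpe := hprof u huY
  have h1 : G.edist v u ≤ (t1.length : ℕ∞) := G.edist_le t1
  have h2 : G.edist u x ≤ (t2.length : ℕ∞) := G.edist_le t2
  have hvu_r : G.edist v u ≤ (r : ℕ∞) := by
    refine le_trans h1 ?_
    exact_mod_cast le_trans (Nat.le.intro hsum) hqrn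
  have hwu : G.edist w u = G.edist v u := by
    rw [profVal, if_pos hvu_r] at hpe
    by_cases hc : G.edist w u ≤ (r : ℕ∞)
    · rw [profVal, if_pos hc] at hpe; exact hpe.symm
    · rw [profVal, if_neg hc] at hpe
      rw [hpe] at hvu_r; simp at hvu_r
  calc G.edist w x ≤ G.edist w u + G.edist u x := SimpleGraph.edist_triangle
    _ = G.edist v u + G.edist u x := by rw [hwu]
    _ ≤ (t1.length : ℕ∞) + (t2.length : ℕ∞) := add_le_add h1 h2
    _ = (q.length : ℕ∞) := by norm_cast
    _ = G.edist v x := hqlen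

/-- If `Y[v] = Y[w]` and the `r`-distance profiles of `v` and `w` agree on
this common set, then the `r`-distance profiles of `v` and `w` agree on `A`. -/
theorem profiles_on_Y_determine_profiles_on_A
    {V : Type} [Fintype V] (G : SimpleGraph V) (r : ℕ)
    (L : LinearOrder V) (A : Set V) (v w : V)
    (hY : WReach G L r v ∩ (⋃ a ∈ A, WReach G L r a)
        = WReach G L r w ∩ (⋃ a ∈ A, WReach G L r a))
    (hprof : ∀ x ∈ WReach G L r v ∩ (⋃ a ∈ A, WReach G L r a),
      profVal G r v x = profVal G r w x) :
    ∀ x ∈ A, profVal G r v x = profVal G r w x := by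
  have hprof' : ∀ x ∈ WReach G L r w ∩ (⋃ a ∈ A, WReach G L r a),
    profVal G r w x = profVal G r v x := fun x hx => (hprof x (hY ▸ hx)).symm
  intro x hx
  have hvw := key_step G r L A v w hprof x hx
  have hwv := key_step G r L A w v hprof' x hx
  by_cases h1 : G.edist v x ≤ (r : ℕ∞) <;> by_cases h2 : G.edist w x ≤ (r : ℕ∞)
  · rw [profVal, if_pos h1, profVal, if_pos h2]
    exact le_antisymm (hwv h2) (hvw h1)
  · exact absurd (le_trans (hvw h1) h1) h2
  · exact absurd (le_trans (hwv h2) h2) h1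
  · simp [profVal, h1, h2]
end

section
/- Let G be a finite graph, r ∈ ℕ, L a linear order of V(G), and A ⊆ V(G) nonempty. For v ∈ V(G), define Y[v] = WReach_r[G,L,v] ∩ WReach_r[G,L,A]. Suppose W ≥ 1 and x ≥ 1 are integers such that |WReach_{2r}[G,L,v]| ≤ W for every v ∈ V(G) and the family {WReach_r[G,L,v] : v ∈ V(G)} has VC-dimension at most x. Then the number of distinct sets Y[v], over v ∈ V(G), is at most 1 + 2·|A|·W^{x+1}. -/
open SimpleGraph

/-!
The nonempty set `Y[v]` is determined by its `L`-largest element `u ∈ WReach_r[G,L,A]`: every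
`w ∈ Y[v]` satisfies `w ≤ u`, and gluing the paths from `w` and `u` to `v` shows that
`w ∈ WReach_{2r}[G,L,u]`. Hence `Y[v]` is the trace of `WReach_r[G,L,v]` on the set
`WReach_{2r}[G,L,u] ∩ WReach_r[G,L,A]` of at most `W` elements, and by the Sauer–Shelah lemma
a family of VC-dimension at most `x` has at most `2 W^x` traces there. There are at most
`|A| W` choices of `u`, plus the empty set.
-/

open Finset in
theorem Nat.sum_range_choose_le_two_mul_pow {n : ℕ} (hn : 1 ≤ n) (d : ℕ) :
    ∑ k ∈ range (d + 1), n.choose k ≤ 2 * n ^ d := by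
  rcases d.eq_zero_or_pos with rfl | hd
  · simp
  induction d, hd using Nat.le_induction with
  | base => simp [sum_range_succ]; omega
  | succ d hd ih =>
    rw [sum_range_succ]
    obtain rfl | hn2 := hn.eq_or_lt
    · rwa [Nat.choose_eq_zero_of_lt (by omega), add_zero, one_pow] at *
    have hchoose : n.choose (d + 1) ≤ n ^ (d + 1) := Nat.choose_le_pow _ _
    have hpow : 2 * n ^ d ≤ n ^ (d + 1) := by rw [pow_succ']; gcongr; omega
    omega

namespace Finset

variable {α : Type*} [DecidableEq α]

theorem card_le_sum_choose_of_forall_shatters {𝒜 : Finset (Finset α)} {s : Finset α} {d : ℕ}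
    (h𝒜 : ∀ t ∈ 𝒜, t ⊆ s) (hd : ∀ t, 𝒜.Shatters t → #t ≤ d) :
    #𝒜 ≤ ∑ k ∈ range (d + 1), (#s).choose k := by
  have hsub : 𝒜.shatterer ⊆ (range (d + 1)).biUnion s.powersetCard := by
    intro t ht
    rw [mem_shatterer] at ht
    obtain ⟨u, hu, htu⟩ := ht.exists_superset
    exact mem_biUnion.2 ⟨#t, mem_range.2 (Nat.lt_succ_of_le (hd t ht)),
      mem_powersetCard.2 ⟨htu.trans (h𝒜 u hu), rfl⟩⟩
  calc #𝒜 ≤ #𝒜.shatterer := card_le_card_shatterer 𝒜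
    _ ≤ #((range (d + 1)).biUnion s.powersetCard) := card_le_card hsub
    _ ≤ ∑ k ∈ range (d + 1), #(s.powersetCard k) := card_biUnion_le
    _ = ∑ k ∈ range (d + 1), (#s).choose k := by simp only [card_powersetCard]

end Finset

section Trace

variable {α : Type}

def trace (F : Set (Set α)) (s : Set α) : Set (Set α) :=
  (· ∩ s) '' F

theorem ncard_trace_le_sum_choose {F : Set (Set α)} {d : ℕ} (hF : VCDimLE F d) (s : Finset α) :
    (trace F s).ncard ≤ ∑ k ∈ Finset.range (d + 1), s.card.choose k := by
  classical
  set 𝒜 : Finset (Finset α) := s.powerset.filter fun t => (t : Set α) ∈ trace F s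
  have h𝒜 : ∀ t : Finset α, t ∈ 𝒜 → t ⊆ s := fun _ ht =>
    Finset.mem_powerset.1 (Finset.mem_filter.1 ht).1
  have htrace : trace F s ⊆ (↑) '' (𝒜 : Set (Finset α)) := by
    rintro _ ⟨S, hS, rfl⟩
    have hcoe : ((s.filter (· ∈ S) : Finset α) : Set α) = S ∩ s := by ext; simp [and_comm]
    refine ⟨s.filter (· ∈ S), Finset.mem_filter.2 ⟨?_, S, hS, hcoe.symm⟩, hcoe⟩
    exact Finset.mem_powerset.2 (Finset.filter_subset _ _)
  have hshatters : ∀ t, 𝒜.Shatters t → Shatters F (t : Set α) := by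
    intro t ht Y hY
    obtain ⟨u, rfl⟩ : ∃ u : Finset α, (u : Set α) = Y :=
      ⟨(t.finite_toSet.subset hY).toFinset, by simp⟩
    obtain ⟨a, ha, hta⟩ := ht (Finset.coe_subset.1 hY)
    obtain ⟨S, hS, haS⟩ := (Finset.mem_filter.1 ha).2
    obtain ⟨b, hb, htb⟩ := ht.exists_superset
    have hts : (t : Set α) ⊆ s := Finset.coe_subset.2 (htb.trans (h𝒜 b hb))
    refine ⟨S, hS, ?_⟩
    dsimp only at haS
    rw [← hta, Finset.coe_inter, ← haS, ← Set.inter_assoc, Set.inter_right_comm,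
      Set.inter_eq_left.2 hts]
  calc (trace F s).ncard ≤ ((↑) '' (𝒜 : Set (Finset α))).ncard :=
        Set.ncard_le_ncard htrace ((𝒜.finite_toSet).image _)
    _ ≤ 𝒜.card := (Set.ncard_image_le 𝒜.finite_toSet).trans (Set.ncard_coe_finset 𝒜).le
    _ ≤ _ := Finset.card_le_sum_choose_of_forall_shatters h𝒜
        fun t ht => by simpa using hF _ (hshatters t ht)

theorem ncard_trace_le_two_mul_pow {F : Set (Set α)} {d W : ℕ} (hF : VCDimLE F d)
    (hW : 1 ≤ W) {s : Set α} (hs : s.Finite) (hsW : s.ncard ≤ W) :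
    (trace F s).ncard ≤ 2 * W ^ d := by
  calc (trace F s).ncard = (trace F hs.toFinset).ncard := by rw [hs.coe_toFinset]
    _ ≤ ∑ k ∈ Finset.range (d + 1), hs.toFinset.card.choose k :=
        ncard_trace_le_sum_choose hF _
    _ ≤ ∑ k ∈ Finset.range (d + 1), W.choose k := by
        gcongr
        rwa [← Set.ncard_eq_toFinset_card s hs]
    _ ≤ 2 * W ^ d := Nat.sum_range_choose_le_two_mul_pow hW d

end Trace

theorem Set.ncard_biUnion_le_ncard_mul {ι α : Type*} {t : Set ι} (ht : t.Finite)
    {s : ι → Set α} {n : ℕ} (hs : ∀ i ∈ t, (s i).ncard ≤ n) :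
    (⋃ i ∈ t, s i).ncard ≤ t.ncard * n := by
  calc (⋃ i ∈ t, s i).ncard ≤ ∑ i ∈ ht.toFinset, (s i).ncard := by
        simpa using ht.toFinset.set_ncard_biUnion_le s
    _ ≤ ht.toFinset.card • n := Finset.sum_le_card_nsmul _ _ _ (by simpa using hs)
    _ = t.ncard * n := by rw [smul_eq_mul, Set.ncard_eq_toFinset_card t ht]

section WReach

variable {V : Type} (G : SimpleGraph V) (L : LinearOrder V)

theorem WReach_mono {r r' : ℕ} (h : r ≤ r') (v : V) : WReach G L r v ⊆ WReach G L r' v :=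
  fun _ ⟨p, hp, hlen, hmin⟩ => ⟨p, hp, hlen.trans h, hmin⟩

theorem mem_WReach_add_of_le {r r' : ℕ} {v w u : V} (hw : w ∈ WReach G L r v)
    (hu : u ∈ WReach G L r' v) (hwu : L.le w u) : w ∈ WReach G L (r + r') u := by
  obtain ⟨p, -, hp, hpmin⟩ := hw
  obtain ⟨q, -, hq, hqmin⟩ := hu
  refine ⟨(p.append q.reverse).bypass, Walk.bypass_isPath _, ?_, fun y hy => ?_⟩
  · calc (p.append q.reverse).bypass.length ≤ (p.append q.reverse).length :=
          Walk.length_bypass_le_length _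
      _ ≤ r + r' := by simp only [Walk.length_append, Walk.length_reverse]; omega
  · rcases (Walk.mem_support_append_iff _ _).1 (Walk.support_bypass_subset_support _ hy) with
      hy | hy
    · exact hpmin y hy
    · exact L.le_trans _ _ _ hwu (hqmin y (by simpa using hy))

theorem exists_WReach_inter_eq [Finite V] (r : ℕ) (B : Set V) {v : V}
    (hne : (WReach G L r v ∩ B).Nonempty) :
    ∃ u ∈ B, WReach G L r v ∩ B = WReach G L r v ∩ (WReach G L (2 * r) u ∩ B) := by
  let := L
  obtain ⟨u, ⟨hvu, huB⟩, hmax⟩ := Set.exists_max_image _ id (Set.toFinite _) hne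
  refine ⟨u, huB, Set.Subset.antisymm (fun w ⟨hvw, hwB⟩ => ⟨hvw, ?_, hwB⟩)
    (Set.inter_subset_inter_right _ Set.inter_subset_right)⟩
  rw [two_mul]
  exact mem_WReach_add_of_le G L hvw hvu (hmax w ⟨hvw, hwB⟩)

end WReach

theorem number_of_Y_sets_bound_general
    {V : Type} [Fintype V] (G : SimpleGraph V) (r : ℕ)
    (L : LinearOrder V) (A : Set V)
    (W x : ℕ) (hW : 1 ≤ W)
    (hWbound : ∀ v : V, (WReach G L (2 * r) v).ncard ≤ W)
    (hVC : VCDimLE {S : Set V | ∃ v : V, S = WReach G L r v} x) :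
    {T : Set V | ∃ v : V, T = WReach G L r v ∩ (⋃ a ∈ A, WReach G L r a)}.ncard
      ≤ 1 + 2 * A.ncard * W ^ (x + 1) := by
  set B := ⋃ a ∈ A, WReach G L r a
  set F := {S : Set V | ∃ v : V, S = WReach G L r v}
  have hBcard : B.ncard ≤ A.ncard * W := Set.ncard_biUnion_le_ncard_mul (Set.toFinite A)
    fun a _ => (Set.ncard_le_ncard (WReach_mono G L (by omega) a)).trans (hWbound a)
  have htrace : ∀ u, (trace F (WReach G L (2 * r) u ∩ B)).ncard ≤ 2 * W ^ x := fun u =>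
    ncard_trace_le_two_mul_pow hVC hW (Set.toFinite _)
      ((Set.ncard_le_ncard Set.inter_subset_left).trans (hWbound u))
  have hcover : {T | ∃ v, T = WReach G L r v ∩ B} ⊆
      insert ∅ (⋃ u ∈ B, trace F (WReach G L (2 * r) u ∩ B)) := by
    rintro _ ⟨v, rfl⟩
    rcases (WReach G L r v ∩ B).eq_empty_or_nonempty with hempty | hne
    · exact Or.inl hempty
    obtain ⟨u, huB, heq⟩ := exists_WReach_inter_eq G L r B hne
    exact Or.inr (Set.mem_biUnion huB ⟨_, ⟨v, rfl⟩, heq.symm⟩)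
  calc {T | ∃ v, T = WReach G L r v ∩ B}.ncard
      ≤ (⋃ u ∈ B, trace F (WReach G L (2 * r) u ∩ B)).ncard + 1 :=
        (Set.ncard_le_ncard hcover).trans (Set.ncard_insert_le _ _)
    _ ≤ B.ncard * (2 * W ^ x) + 1 := by
        gcongr; exact Set.ncard_biUnion_le_ncard_mul (Set.toFinite B) fun u _ => htrace u
    _ ≤ A.ncard * W * (2 * W ^ x) + 1 := by gcongr
    _ = 1 + 2 * A.ncard * W ^ (x + 1) := by ring

/-- A bound on the number of distinct sets
`Y[v] = WReach_r[G,L,v] ∩ WReach_r[G,L,A]`. -/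
theorem number_of_Y_sets_bound
    {V : Type} [Fintype V] (G : SimpleGraph V) (r : ℕ)
    (L : LinearOrder V) (A : Set V) (hA : A.Nonempty)
    (W x : ℕ) (hW : 1 ≤ W) (hx : 1 ≤ x)
    (hWbound : ∀ v : V, (WReach G L (2 * r) v).ncard ≤ W)
    (hVC : VCDimLE {S : Set V | ∃ v : V, S = WReach G L r v} x) :
    {T : Set V | ∃ v : V, T = WReach G L r v ∩ (⋃ a ∈ A, WReach G L r a)}.ncard
      ≤ 1 + 2 * A.ncard * W ^ (x + 1) :=
  number_of_Y_sets_bound_general G r L A W x hW hWbound hVC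
end

section
/- Let 𝒞 be a class of finite graphs that is uniformly quasi-wide with margins N : ℕ×ℕ → ℕ and s : ℕ → ℕ, and let c ≥ 1 be an integer. Then the class 𝒞^c consisting of all subgraphs of c-blowups G•K_c of graphs G ∈ 𝒞 is uniformly quasi-wide with margins (r,m) ↦ c·N(r,m) and r ↦ c·s(r). -/
open SimpleGraph

/-- A class of finite graphs is uniformly quasi-wide with margins `N` and `s`. -/
def UQW (C : Set FinGraph) (N : ℕ → ℕ → ℕ) (s : ℕ → ℕ) : Prop :=
  ∀ r m : ℕ, ∀ G ∈ C, ∀ A : Set G.V, N r m ≤ A.ncard →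
    ∃ S : Set G.V, S.ncard ≤ s r ∧
      ∃ B ⊆ A \ S, m ≤ B.ncard ∧
        ∀ u v : ↥(Sᶜ), (u : G.V) ∈ B → (v : G.V) ∈ B → u ≠ v →
          ((r : ℕ) : ℕ∞) < (G.graph.induce Sᶜ).edist u v

/-- The `c`-blowup `G • K_c` of a finite graph `G`. -/
def blowup (G : FinGraph) (c : ℕ) : FinGraph where
  V := G.V × Fin c
  fintypeV := inferInstance
  graph :=
    { Adj := fun p q => (p.1 = q.1 ∧ p.2 ≠ q.2) ∨ G.graph.Adj p.1 q.1
      symm := by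
        constructor
        rintro p q (⟨h1, h2⟩ | h)
        · exact Or.inl ⟨h1.symm, h2.symm⟩
        · exact Or.inr h.symm
      loopless := by
        constructor
        rintro p (⟨-, h⟩ | h)
        · exact h rfl
        · exact G.graph.loopless.irrefl p.1 h }

/-! Project a subgraph `H` of `G • K_c` onto `G` by `φ x = (f x).1`. Edges of `H` map to edges of `G`
or collapse, so the projection does not increase distances, and its fibres have at most `c`
elements. A set `A` with `c · N r m` vertices therefore projects onto at least `N r m` vertices of
`G`; quasi-wideness of `G` gives a set `S` of at most `s r` vertices and an `r`-independent
`B' ⊆ φ(A) ∖ S` in `G - S`. Deleting the preimage of `S` (at most `c · s r` vertices) and lifting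
`B'` to one preimage in `A` per vertex gives an `r`-independent set in the remainder of `H`. -/

theorem Set.ncard_le_mul_ncard_of_mapsTo {α β : Type*} {f : α → β} {s : Set α} {t : Set β}
    (hf : MapsTo f s t) (ht : t.Finite) (n : ℕ)
    (hn : ∀ b ∈ t, {a ∈ s | f a = b}.ncard ≤ n) : s.ncard ≤ n * t.ncard := by
  classical
  obtain hs | hs := s.finite_or_infinite
  · rw [ncard_eq_toFinset_card s hs, ncard_eq_toFinset_card t ht]
    refine Finset.card_le_mul_card_image_of_maps_to
      (fun a ha => by simpa using hf (by simpa using ha)) n fun b hb => ?_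
    rw [← ncard_coe_finset]
    convert hn b (by simpa using hb) using 2
    ext a
    simp
  · simp [hs.ncard]

namespace SimpleGraph

variable {V W : Type} {G : SimpleGraph V} {H : SimpleGraph W} {φ : W → V}

theorem Walk.exists_length_le_of_adj_or_eq
    (hφ : ∀ a b, H.Adj a b → G.Adj (φ a) (φ b) ∨ φ a = φ b) {u v : W} (p : H.Walk u v) :
    ∃ q : G.Walk (φ u) (φ v), q.length ≤ p.length := by
  induction p with
  | nil => exact ⟨.nil, le_rfl⟩
  | cons hadj _ ih =>
    obtain ⟨q, hq⟩ := ih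
    rcases hφ _ _ hadj with hadj' | heq
    · exact ⟨.cons hadj' q, by simpa using hq⟩
    · exact ⟨q.copy heq.symm rfl, by simpa using hq.trans (Nat.le_succ _)⟩

theorem edist_le_of_adj_or_eq (hφ : ∀ a b, H.Adj a b → G.Adj (φ a) (φ b) ∨ φ a = φ b)
    (u v : W) : G.edist (φ u) (φ v) ≤ H.edist u v := by
  refine le_iInf fun p => ?_
  obtain ⟨q, hq⟩ := p.exists_length_le_of_adj_or_eq hφ
  exact (edist_le q).trans (by exact_mod_cast hq)

theorem rIndep_induce_compl_preimage
    (hφ : ∀ a b, H.Adj a b → G.Adj (φ a) (φ b) ∨ φ a = φ b) {r : ℕ} {S : Set V} {B : Set W}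
    (hB : Set.InjOn φ B) (hind : RIndep (G.induce Sᶜ) r (Subtype.val ⁻¹' (φ '' B))) :
    RIndep (H.induce (φ ⁻¹' S)ᶜ) r (Subtype.val ⁻¹' B) := by
  intro u hu v hv huv
  let ψ : ↥(φ ⁻¹' S)ᶜ → ↥Sᶜ := fun x => ⟨φ x, x.2⟩
  have hψ : ∀ a b, (H.induce (φ ⁻¹' S)ᶜ).Adj a b → (G.induce Sᶜ).Adj (ψ a) (ψ b) ∨ ψ a = ψ b :=
    fun a b hab => (hφ a b hab).imp id Subtype.ext
  have hne : ψ u ≠ ψ v := fun h =>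
    huv (Subtype.ext (hB hu hv (congrArg Subtype.val h)))
  exact (hind (ψ u) ⟨u, hu, rfl⟩ (ψ v) ⟨v, hv, rfl⟩ hne).trans_le (edist_le_of_adj_or_eq hψ u v)

end SimpleGraph

open Set in
theorem UQW.of_adj_or_eq_of_ncard_fiber_le {C D : Set FinGraph} {N : ℕ → ℕ → ℕ} {s : ℕ → ℕ}
    (hC : UQW C N s) {c : ℕ} (hc : 0 < c)
    (hD : ∀ H ∈ D, ∃ G ∈ C, ∃ φ : H.V → G.V,
      (∀ a b, H.graph.Adj a b → G.graph.Adj (φ a) (φ b) ∨ φ a = φ b) ∧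
        ∀ b, {x | φ x = b}.ncard ≤ c) :
    UQW D (fun r m => c * N r m) (fun r => c * s r) := by
  intro r m H hH A hA
  obtain ⟨G, hG, φ, hφ, hfib⟩ := hD H hH
  have hfib' : ∀ (T : Set H.V) b, {x ∈ T | φ x = b}.ncard ≤ c := fun T b =>
    (ncard_le_ncard (fun _ hx => hx.2) (toFinite _)).trans (hfib b)
  have hN : N r m ≤ (φ '' A).ncard := Nat.le_of_mul_le_mul_left
    (hA.trans (ncard_le_mul_ncard_of_mapsTo (mapsTo_image φ A) (toFinite _) c
      fun b _ => hfib' A b)) hc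
  obtain ⟨S, hS, B', hB'A, hB', hind⟩ := hC r m G hG (φ '' A) hN
  obtain ⟨B, hBA, hBij⟩ := exists_subset_bijOn (A ∩ φ ⁻¹' B') φ
  rw [image_inter_preimage, inter_eq_right.2 (hB'A.trans sdiff_subset)] at hBij
  refine ⟨φ ⁻¹' S, ?_, B, fun x hx => ⟨(hBA hx).1, (hB'A (hBij.mapsTo hx)).2⟩,
    hBij.ncard_eq ▸ hB', fun u v hu hv => ?_⟩
  · calc (φ ⁻¹' S).ncard ≤ c * S.ncard :=
          ncard_le_mul_ncard_of_mapsTo (mapsTo_preimage φ S) (toFinite _) c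
            fun b _ => hfib' _ b
      _ ≤ c * s r := Nat.mul_le_mul_left c hS
  · refine SimpleGraph.rIndep_induce_compl_preimage hφ hBij.injOn ?_ u hu v hv
    rw [hBij.image_eq]
    exact fun u hu v hv => hind u v hu hv

theorem IsSubgraphOf.exists_adj_or_eq_ncard_fiber_le {H G : FinGraph} {c : ℕ}
    (h : IsSubgraphOf H (blowup G c)) : ∃ φ : H.V → G.V,
      (∀ a b, H.graph.Adj a b → G.graph.Adj (φ a) (φ b) ∨ φ a = φ b) ∧
        ∀ b, {x | φ x = b}.ncard ≤ c := by
  obtain ⟨f, hf⟩ := h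
  refine ⟨fun x => (f x).1, fun a b hab => ?_, fun b => ?_⟩
  · rcases hf a b hab with ⟨heq, -⟩ | hadj
    exacts [Or.inr heq, Or.inl hadj]
  have hinj : Set.InjOn (fun x => (f x).2) {x | (f x).1 = b} := fun x hx y hy hxy =>
    f.injective (Prod.ext (hx.trans hy.symm) hxy)
  simpa using Set.ncard_le_ncard_of_injOn _ (fun _ _ => Set.mem_univ _) hinj Set.finite_univ

/-- If `C` is uniformly quasi-wide with margins `N` and `s`, then the class
of all subgraphs of `c`-blowups of members of `C` is uniformly quasi-wide with margins
`(r,m) ↦ c·N r m` and `r ↦ c·s r`. -/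
theorem uqw_blowup_class
    (C : Set FinGraph) (N : ℕ → ℕ → ℕ) (s : ℕ → ℕ) (hC : UQW C N s)
    (c : ℕ) (hc : 1 ≤ c) :
    UQW {H : FinGraph | ∃ G ∈ C, IsSubgraphOf H (blowup G c)}
      (fun r m => c * N r m) (fun r => c * s r) :=
  hC.of_adj_or_eq_of_ncard_fiber_le hc fun _ ⟨G, hG, hH⟩ =>
    ⟨G, hG, hH.exists_adj_or_eq_ncard_fiber_le⟩
end

section
/- Let G be a finite graph and r ≥ 1. Let Z ⊆ V(G) be an r-domination core of G, let X ⊆ V(G) be a (Z,r)-dominator, let S ⊆ V(G), and let R ⊆ Z ∖ (X ∪ S) be a set satisfying: (i) all vertices of R have the same 3r-projection profile on X (i.e., ρ_{3r}[x,X] = ρ_{3r}[y,X] for all x,y ∈ R); (ii) all vertices of R have the same r-distance profile on S (i.e., π_r[x,S] = π_r[y,S] for all x,y ∈ R); (iii) R is 2r-independent in G − S; and (iv) |R| > |M_{3r}(z,X)| + |S| + 1 for every z ∈ R. Then for every z ∈ R, the set Z ∖ {z} is an r-domination core of G. -/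
open SimpleGraph

/-!
Let `D` be a minimum `(Z ∖ {z}, r)`-dominator. It suffices that `D` also dominates `z`, for then
it is a minimum `(Z, r)`-dominator. If not, every other `w ∈ R` is dominated by some `d_w ∈ D`
along a path that avoids `S` and `X`: a path through `S` would, by the common `r`-distance
profile on `S`, bring `z` within distance `r` of `d_w`, and similarly for `X` with the common
projection profile. Because `R` is `2r`-independent in `G - S`, the `d_w` are distinct. Replacing
them by `M_{3r}(z, X)` keeps a `(Z ∖ {z}, r)`-dominator: a vertex `u` dominated by `d_w` is within
`r` of some `x ∈ X`, and the first vertex of `X` on the walk `w → d_w → u → x` is within `r` of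
`u` and lies in `M_{3r}(w, X) = M_{3r}(z, X)`. As `|M_{3r}(z, X)| < |R| - 1`, this contradicts
the minimality of `D`.
-/

namespace SimpleGraph.Walk

variable {V : Type} {G : SimpleGraph V}

theorem exists_eq_append_of_exists_mem_support (A : Set V) :
    ∀ {u v : V} (p : G.Walk u v), (∃ y ∈ p.support, y ∈ A) →
      ∃ x ∈ A, ∃ (q : G.Walk u x) (q' : G.Walk x v),
        p = q.append q' ∧ ∀ y ∈ q.support, y ≠ x → y ∉ A
  | u, _, .nil, h => by
    obtain ⟨y, hy, hyA⟩ := h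
    rw [support_nil, List.mem_singleton] at hy
    subst hy
    exact ⟨y, hyA, .nil, .nil, rfl, by simp⟩
  | u, _, .cons hadj p, h => by
    by_cases huA : u ∈ A
    · exact ⟨u, huA, .nil, .cons hadj p, rfl, by simp⟩
    obtain ⟨y, hy, hyA⟩ := h
    have hyp : y ∈ p.support := by
      rcases (mem_support_iff _).1 hy with rfl | hy
      · exact absurd hyA huA
      · exact hy
    obtain ⟨x, hxA, q, q', rfl, hq⟩ := exists_eq_append_of_exists_mem_support A p ⟨y, hyp, hyA⟩
    refine ⟨x, hxA, .cons hadj q, q', rfl, fun y hy hyx => ?_⟩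
    rcases (mem_support_iff _).1 hy with rfl | hy
    · exact huA
    · exact hq y hy hyx

theorem edist_add_edist_le_length_s17 {u v y : V} (p : G.Walk u v) (hy : y ∈ p.support) :
    G.edist u y + G.edist y v ≤ p.length := by
  classical
  conv_rhs => rw [← p.take_spec hy, length_append, Nat.cast_add]
  exact add_le_add (edist_le _) (edist_le _)

theorem edist_le_length_of_mem_support {u v y : V} (p : G.Walk u v) (hy : y ∈ p.support) :
    G.edist u y ≤ p.length :=
  le_self_add.trans (p.edist_add_edist_le_length_s17 hy)

theorem induce_edist_le {s : Set V} {u v : V} (p : G.Walk u v) (hp : ∀ x ∈ p.support, x ∈ s)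
    (hu : u ∈ s) (hv : v ∈ s) : (G.induce s).edist ⟨u, hu⟩ ⟨v, hv⟩ ≤ p.length := by
  have h := edist_le (p.induce s hp)
  rwa [← length_map (Embedding.induce s).toHom, map_induce] at h

end SimpleGraph.Walk

theorem SimpleGraph.exists_walk_length_le_of_edist_le_s17 {V : Type} {G : SimpleGraph V} {u v : V}
    {n : ℕ} (h : G.edist u v ≤ n) : ∃ p : G.Walk u v, p.length ≤ n := by
  obtain ⟨p, hp⟩ := exists_walk_of_edist_ne_top (ne_top_of_le_ne_top (ENat.natCast_ne_top n) h)
  exact ⟨p, by exact_mod_cast hp ▸ h⟩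

section

variable {V : Type} {G : SimpleGraph V}

theorem eq_of_truncate_eq {a b r : ℕ∞}
    (h : (if a ≤ r then a else ⊤) = (if b ≤ r then b else ⊤)) (hb : b ≤ r) : a = b := by
  rw [if_pos hb] at h
  split_ifs at h with ha
  · exact h
  · subst h
    exact absurd (le_top.trans hb) ha

theorem avoidDist_le_length {A : Set V} {u v : V} (p : G.Walk u v)
    (hp : ∀ x ∈ p.support, x ≠ v → x ∉ A) : avoidDist G A u v ≤ p.length := by
  classical
  have hbypass : avoidDist G A u v ≤ p.bypass.length := sInf_le
    ⟨p.bypass, p.bypass_isPath, fun x hx => hp x (p.support_bypass_subset_support hx), rfl⟩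
  exact hbypass.trans (by exact_mod_cast p.length_bypass_le_length)

theorem edist_le_avoidDist {A : Set V} {u v : V} : G.edist u v ≤ avoidDist G A u v :=
  le_sInf fun _ ⟨p, _, _, hp⟩ => hp ▸ edist_le p

theorem avoidDist_le_length_of_projProfVal_eq {n : ℕ} {X : Set V} {z w x : V}
    (hzw : projProfVal G n X z x = projProfVal G n X w x) (p : G.Walk w x)
    (hp : ∀ y ∈ p.support, y ≠ x → y ∉ X) (hlen : p.length ≤ n) :
    avoidDist G X z x ≤ p.length := by
  have hw : avoidDist G X w x ≤ p.length := avoidDist_le_length p hp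
  rw [eq_of_truncate_eq hzw (hw.trans (by exact_mod_cast hlen))]
  exact hw

theorem edist_le_length_of_profVal_eq {r : ℕ} {z w d s : V}
    (hzw : profVal G r z s = profVal G r w s) (p : G.Walk w d) (hlen : p.length ≤ r)
    (hs : s ∈ p.support) : G.edist z d ≤ p.length := by
  have hp := p.edist_add_edist_le_length_s17 hs
  have hws : G.edist w s ≤ r := le_self_add.trans (hp.trans (by exact_mod_cast hlen))
  calc G.edist z d ≤ G.edist z s + G.edist s d := SimpleGraph.edist_triangle
    _ = G.edist w s + G.edist s d := by rw [eq_of_truncate_eq hzw hws]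
    _ ≤ p.length := hp

theorem edist_le_length_of_projProfVal_eq {n : ℕ} {X : Set V} {z w d x : V}
    (hzw : ∀ v ∈ X, projProfVal G n X z v = projProfVal G n X w v) (p : G.Walk w d)
    (hlen : p.length ≤ n) (hx : x ∈ p.support) (hxX : x ∈ X) : G.edist z d ≤ p.length := by
  obtain ⟨x, hxX, q, q', rfl, hq⟩ := p.exists_eq_append_of_exists_mem_support X ⟨x, hx, hxX⟩
  rw [Walk.length_append] at hlen ⊢
  calc G.edist z d ≤ G.edist z x + G.edist x d := SimpleGraph.edist_triangle
    _ ≤ q.length + q'.length := by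
      gcongr
      · exact edist_le_avoidDist.trans
          (avoidDist_le_length_of_projProfVal_eq (hzw x hxX) q hq (by omega))
      · exact edist_le q'
    _ = ((q.length + q'.length : ℕ) : ℕ∞) := by push_cast; rfl

theorem support_avoids_of_lt_edist {r n : ℕ} {X S : Set V} {z w d : V} (hrn : r ≤ n)
    (hS : ∀ v ∈ S, profVal G r z v = profVal G r w v)
    (hX : ∀ v ∈ X, projProfVal G n X z v = projProfVal G n X w v)
    (hzd : (r : ℕ∞) < G.edist z d) (p : G.Walk w d) (hlen : p.length ≤ r) :
    ∀ x ∈ p.support, x ∉ S ∧ x ∉ X := by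
  have hfar : ¬ G.edist z d ≤ p.length := fun h => hzd.not_ge (h.trans (by exact_mod_cast hlen))
  exact fun x hx => ⟨fun hxS => hfar (edist_le_length_of_profVal_eq (hS x hxS) p hlen hx),
    fun hxX => hfar (edist_le_length_of_projProfVal_eq hX p (hlen.trans hrn) hx hxX)⟩

theorem injOn_of_walks_avoiding {n : ℕ} {S T : Set V} {f : V → V}
    (hT : ∀ u v : ↥(Sᶜ), (u : V) ∈ T → (v : V) ∈ T → u ≠ v →
      ((2 * n : ℕ) : ℕ∞) < (G.induce Sᶜ).edist u v)
    (hf : ∀ w ∈ T, ∃ p : G.Walk w (f w), p.length ≤ n ∧ ∀ x ∈ p.support, x ∉ S) :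
    Set.InjOn f T := by
  intro a ha b hb hab
  by_contra hne
  obtain ⟨pa, hpa, hpaS⟩ := hf a ha
  obtain ⟨pb, hpb, hpbS⟩ := hf b hb
  let W : G.Walk a b := pa.append (pb.reverse.copy hab.symm rfl)
  have hWS : ∀ x ∈ W.support, x ∈ Sᶜ := by
    intro x hx
    rcases (Walk.mem_support_append_iff _ _).1 hx with hx | hx
    · exact hpaS x hx
    · simp only [Walk.support_copy, Walk.support_reverse, List.mem_reverse] at hx
      exact hpbS x hx
  have hWlen : W.length ≤ 2 * n := by
    simp only [W, Walk.length_append, Walk.length_copy, Walk.length_reverse]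
    omega
  have hlt := hT ⟨a, hWS a W.start_mem_support⟩ ⟨b, hWS b W.end_mem_support⟩ ha hb
    (fun h => hne (congrArg Subtype.val h))
  exact hlt.not_ge ((W.induce_edist_le hWS _ _).trans (by exact_mod_cast hWlen))

theorem exists_mem_Mproj_near {r : ℕ} {X : Set V} {z w d u : V}
    (hzw : ∀ v ∈ X, projProfVal G (3 * r) X z v = projProfVal G (3 * r) X w v)
    (p : G.Walk w d) (hlen : p.length ≤ r) (hpX : ∀ y ∈ p.support, y ∉ X)
    (hud : G.edist u d ≤ r) (huX : ∃ x ∈ X, G.edist u x ≤ r) :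
    ∃ x ∈ Mproj G (3 * r) X z, G.edist u x ≤ r := by
  obtain ⟨x₀, hx₀X, hux₀⟩ := huX
  obtain ⟨q, hq⟩ := exists_walk_length_le_of_edist_le_s17 hud
  obtain ⟨t, ht⟩ := exists_walk_length_le_of_edist_le_s17 hux₀
  -- `P` runs `d → u → x₀`, so each of its vertices is within `r` of `u`.
  let P : G.Walk d x₀ := q.reverse.append t
  obtain ⟨x, hxX, P₁, P₂, hP, hP₁⟩ :=
    P.exists_eq_append_of_exists_mem_support X ⟨x₀, P.end_mem_support, hx₀X⟩
  have hPlen : P₁.length + P₂.length = q.length + t.length := by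
    simpa only [P, Walk.length_append, Walk.length_reverse, eq_comm]
      using congrArg Walk.length hP
  have hW : avoidDist G X z x ≤ (p.append P₁).length := by
    refine avoidDist_le_length_of_projProfVal_eq (hzw x hxX) _ (fun y hy hyx => ?_) ?_
    · rcases (Walk.mem_support_append_iff _ _).1 hy with hy | hy
      · exact hpX y hy
      · exact hP₁ y hy hyx
    · rw [Walk.length_append]
      omega
  refine ⟨x, ⟨hxX, hW.trans ?_⟩, ?_⟩
  · rw [Walk.length_append]
    exact_mod_cast (by omega : p.length + P₁.length ≤ 3 * r)
  have hxP : x ∈ P.support := by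
    rw [hP]
    exact (Walk.mem_support_append_iff _ _).2 (Or.inl P₁.end_mem_support)
  rcases (Walk.mem_support_append_iff _ _).1 hxP with hx | hx
  · rw [Walk.support_reverse, List.mem_reverse] at hx
    exact (q.edist_le_length_of_mem_support hx).trans (by exact_mod_cast hq)
  · exact (t.edist_le_length_of_mem_support hx).trans (by exact_mod_cast ht)

theorem ncard_diff_image_union_lt [Finite V] {D M T : Set V} {f : V → V}
    (hf : Set.InjOn f T) (hfD : Set.MapsTo f T D) (hM : M.ncard < T.ncard) :
    (D \ f '' T ∪ M).ncard < D.ncard := by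
  have hsub : f '' T ⊆ D := hfD.image_subset
  have hunion := Set.ncard_union_le (D \ f '' T) M
  have hdiff := Set.ncard_sdiff hsub
  have himage := hf.ncard_image
  have hle := Set.ncard_le_ncard hsub
  omega

theorem IsMinDominator.of_diff_singleton {r : ℕ} {Z D : Set V} {z : V}
    (hD : IsMinDominator G r (Z \ {z}) D) (hz : ∃ d ∈ D, G.edist z d ≤ r) :
    IsMinDominator G r Z D := by
  refine ⟨fun u hu => ?_, fun D' hD' => hD.2 D' fun u hu => hD' u hu.1⟩
  by_cases huz : u = z
  · exact huz ▸ hz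
  · exact hD.1 u ⟨hu, huz⟩

theorem exists_dominator_near_of_isMinDominator [Finite V] {r : ℕ} {Z X S R D : Set V} {z : V}
    (hX : IsDominator G r Z X) (hR : R ⊆ Z)
    (hproj : ∀ x ∈ R, ∀ y ∈ R, ∀ v ∈ X,
      projProfVal G (3 * r) X x v = projProfVal G (3 * r) X y v)
    (hprof : ∀ x ∈ R, ∀ y ∈ R, ∀ v ∈ S, profVal G r x v = profVal G r y v)
    (hind : ∀ u v : ↥(Sᶜ), (u : V) ∈ R → (v : V) ∈ R → u ≠ v →
      ((2 * r : ℕ) : ℕ∞) < (G.induce Sᶜ).edist u v)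
    (hsize : (Mproj G (3 * r) X z).ncard + 1 < R.ncard)
    (hz : z ∈ R) (hD : IsMinDominator G r (Z \ {z}) D) :
    ∃ d ∈ D, G.edist z d ≤ r := by
  by_contra! hfar
  have hpath : ∀ w ∈ R \ {z}, ∃ d ∈ D, ∃ p : G.Walk w d,
      p.length ≤ r ∧ ∀ x ∈ p.support, x ∉ S ∧ x ∉ X := by
    intro w hw
    obtain ⟨d, hd, hwd⟩ := hD.1 w ⟨hR hw.1, hw.2⟩
    obtain ⟨p, hp⟩ := exists_walk_length_le_of_edist_le_s17 hwd
    exact ⟨d, hd, p, hp, support_avoids_of_lt_edist (by omega) (hprof z hz w hw.1)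
      (hproj z hz w hw.1) (hfar d hd) p hp⟩
  choose! f hfD hf using hpath
  have hinj : Set.InjOn f (R \ {z}) := injOn_of_walks_avoiding
    (fun u v hu hv => hind u v hu.1 hv.1)
    (fun w hw => (hf w hw).imp fun p hp => ⟨hp.1, fun x hx => (hp.2 x hx).1⟩)
  have hdom : IsDominator G r (Z \ {z}) (D \ f '' (R \ {z}) ∪ Mproj G (3 * r) X z) := by
    intro u hu
    obtain ⟨d, hd, hud⟩ := hD.1 u hu
    by_cases hdf : d ∈ f '' (R \ {z})
    · obtain ⟨w, hw, rfl⟩ := hdf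
      obtain ⟨p, hp, hpSX⟩ := hf w hw
      obtain ⟨x, hxM, hux⟩ := exists_mem_Mproj_near (hproj z hz w hw.1) p hp
        (fun y hy => (hpSX y hy).2) hud (hX u hu.1)
      exact ⟨x, Or.inr hxM, hux⟩
    · exact ⟨d, Or.inl ⟨hd, hdf⟩, hud⟩
  have hM : (Mproj G (3 * r) X z).ncard < (R \ {z}).ncard := by
    rw [Set.ncard_sdiff_singleton_of_mem hz]
    omega
  exact (hD.2 _ hdom).not_gt (ncard_diff_image_union_lt hinj hfD hM)

end

theorem irrelevant_dominatee_general
    {V : Type} [Fintype V] (G : SimpleGraph V) (r : ℕ)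
    (Z : Set V) (hZ : IsDomCore G r Z)
    (X : Set V) (hX : IsDominator G r Z X)
    (S : Set V) (R : Set V) (hR : R ⊆ Z \ (X ∪ S))
    (hproj : ∀ x ∈ R, ∀ y ∈ R, ∀ v ∈ X,
      projProfVal G (3 * r) X x v = projProfVal G (3 * r) X y v)
    (hprof : ∀ x ∈ R, ∀ y ∈ R, ∀ v ∈ S, profVal G r x v = profVal G r y v)
    (hind : ∀ u v : ↥(Sᶜ), (u : V) ∈ R → (v : V) ∈ R → u ≠ v →
      ((2 * r : ℕ) : ℕ∞) < (G.induce Sᶜ).edist u v)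
    (hsize : ∀ z ∈ R, (Mproj G (3 * r) X z).ncard + S.ncard + 1 < R.ncard) :
    ∀ z ∈ R, IsDomCore G r (Z \ {z}) := by
  intro z hz D hD
  have hz_dominated : ∃ d ∈ D, G.edist z d ≤ r :=
    exists_dominator_near_of_isMinDominator hX (hR.trans Set.sdiff_subset) hproj hprof hind
      (by have := hsize z hz; omega) hz hD
  exact hZ D (hD.of_diff_singleton hz_dominated)

/-- the exchange argument: any vertex of the homogeneous set `R` is an
irrelevant dominatee, i.e. can be removed from the domination core `Z`. -/
theorem irrelevant_dominatee
    {V : Type} [Fintype V] (G : SimpleGraph V) (r : ℕ) (hr : 1 ≤ r)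
    (Z : Set V) (hZ : IsDomCore G r Z)
    (X : Set V) (hX : IsDominator G r Z X)
    (S : Set V) (R : Set V) (hR : R ⊆ Z \ (X ∪ S))
    (hproj : ∀ x ∈ R, ∀ y ∈ R, ∀ v ∈ X,
      projProfVal G (3 * r) X x v = projProfVal G (3 * r) X y v)
    (hprof : ∀ x ∈ R, ∀ y ∈ R, ∀ v ∈ S, profVal G r x v = profVal G r y v)
    (hind : ∀ u v : ↥(Sᶜ), (u : V) ∈ R → (v : V) ∈ R → u ≠ v →
      ((2 * r : ℕ) : ℕ∞) < (G.induce Sᶜ).edist u v)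
    (hsize : ∀ z ∈ R, (Mproj G (3 * r) X z).ncard + S.ncard + 1 < R.ncard) :
    ∀ z ∈ R, IsDomCore G r (Z \ {z}) :=
  irrelevant_dominatee_general G r Z hZ X hX S R hR hproj hprof hind hsize
end
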